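/- One has the identity (θ, 0, 0, 0, 0, 0) = −μ₂ + 4μ₃ + 3μ₄ + 2μ₅ + μ₆ − 2μ₇ + 2μ₈ − 3μ₉ + 6μ₁₀ in ℂ⁶, and the ℤ-submodule of ℂ⁶ generated by the two vectors μ₁ = (1,0,0,0,0,0) and (θ,0,0,0,0,0) is a free ℤ-module of rank 2 which is a direct summand of the ℤ-submodule generated by {μ₁, μ₂, μ₃, μ₄, μ₅, μ₆, μ₇, μ₈, μ₉, μ₁₀}. -/

import Mathlib

open Complex

/-- The sixth root of unity `ω = e^{πi/3} = (1 + i√3)/2`. -/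
noncomputable def ω : ℂ := (1 + Real.sqrt 3 * I) / 2

/-- The basis vectors `μ₁, …, μ₁₀` of the range of the Chern–Connes character `𝐓₆`. -/
noncomputable def μ (θ : ℝ) : Fin 10 → Fin 6 → ℂ :=
  ![![1, 0, 0, 0, 0, 0],
    ![1/6, 1/6, 1/6, 1/6, 1/6, 1/6],
    ![1/6, (1 - ω)/6, -ω/6, -ω/6, -(1/6), -(1/6)],
    ![1/6, -ω/6, (ω - 1)/6, (ω - 1)/6, 1/6, 1/6],
    ![1/6, -(1/6), 1/6, 1/6, -(1/6), -(1/6)],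
    ![1/6, (ω - 1)/6, -ω/6, -ω/6, 1/6, 1/6],
    ![1/3, 0, 0, 1/3, 0, 0],
    ![1/3, 0, 0, -ω/3, 0, 0],
    ![1/2, 0, 0, 0, 0, 1/2],
    ![(θ : ℂ)/6, ω/6, (1 + ω)/18, (1 + ω)/6, 1/12, 1/3]]

/-! Irrationality of `θ` makes `μ₁` and `(θ,0,…,0)` independent over `ℤ`. The identity has
coefficient `1` on `μ₆`, so replacing `μ₆` by `(θ,0,…,0)` does not change the lattice spanned by
the `μᵢ`, and the remaining eight `μᵢ` span a complement: their last five coordinates, which lie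
in `ℚ(ω)⁵ ≅ ℚ¹⁰`, are linearly independent, while `μ₁` and `(θ,0,…,0)` vanish there. -/

open Submodule

lemma Irrational.linearIndependent_one_ofReal {θ : ℝ} (hθ : Irrational θ) :
    LinearIndependent ℤ ![(1 : ℂ), θ] := by
  rw [LinearIndependent.pair_iff]
  intro s t hst
  have hre : (s : ℝ) + t * θ = 0 := by simpa using congrArg Complex.re hst
  obtain rfl : t = 0 := by
    by_contra ht
    exact ((hθ.intCast_mul ht).intCast_add s).ne_zero hre
  simpa using hre

lemma LinearIndependent.free_span_pair_and_finrank {R M : Type*} [Ring R] [Nontrivial R]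
    [StrongRankCondition R] [AddCommGroup M] [Module R M] {x y : M}
    (h : LinearIndependent R ![x, y]) :
    Module.Free R (span R {x, y}) ∧ Module.finrank R (span R {x, y}) = 2 := by
  rw [← Matrix.range_cons_cons_empty x y ![]]
  exact ⟨.of_basis (.span h), by simpa using finrank_span_eq_card h⟩

lemma linearIndependent_μ_zero_thetaVector {θ : ℝ} (hθ : Irrational θ) :
    LinearIndependent ℤ ![μ θ 0, ![(θ : ℂ), 0, 0, 0, 0, 0]] := by
  refine .of_comp (LinearMap.proj 0) ?_
  convert hθ.linearIndependent_one_ofReal using 1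
  ext i
  fin_cases i <;> rfl

lemma thetaVector_eq (θ : ℝ) :
    (![(θ : ℂ), 0, 0, 0, 0, 0] : Fin 6 → ℂ)
      = -μ θ 1 + (4 : ℤ) • μ θ 2 + (3 : ℤ) • μ θ 3 + (2 : ℤ) • μ θ 4 + μ θ 5
        - (2 : ℤ) • μ θ 6 + (2 : ℤ) • μ θ 7 - (3 : ℤ) • μ θ 8 + (6 : ℤ) • μ θ 9 := by
  ext j
  fin_cases j <;> simp [μ, ω] <;> ring

/-- `μ θ i` is the paper's `μᵢ₊₁`: these are the indices of `μ₂, …, μ₅, μ₇, …, μ₁₀`. -/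
def complementIndex : Fin 8 → Fin 10 := ![1, 2, 3, 4, 6, 7, 8, 9]

lemma eq_zero_or_eq_five_or_exists_complementIndex (i : Fin 10) :
    i = 0 ∨ i = 5 ∨ ∃ k, complementIndex k = i := by
  revert i
  decide

lemma thetaVector_sub_μ_five_mem_span_complement (θ : ℝ) :
    ![(θ : ℂ), 0, 0, 0, 0, 0] - μ θ 5 ∈ span ℤ (Set.range (μ θ ∘ complementIndex)) := by
  rw [mem_span_range_iff_exists_fun]
  refine ⟨![-1, 4, 3, 2, -2, 2, -3, 6], ?_⟩
  simp only [thetaVector_eq, Fin.sum_univ_eight, Function.comp_apply, complementIndex]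
  simp only [Matrix.cons_val, neg_smul, one_smul]
  abel

lemma linearIndependent_tail_μ_complement (θ : ℝ) :
    LinearIndependent ℤ (fun k => Fin.tail (μ θ (complementIndex k))) := by
  rw [Fintype.linearIndependent_iff]
  intro c hc
  simp only [funext_iff, Fin.forall_fin_succ, Fin.sum_univ_eight] at hc
  simp [complementIndex, μ, ω, Complex.ext_iff] at hc
  obtain ⟨⟨r1, i1⟩, ⟨r2, i2⟩, ⟨r3, i3⟩, r4, r5⟩ := hc
  -- the imaginary parts carry a common factor `√3`
  field_simp at i1 i2 i3
  have h3 : Real.sqrt 3 ≠ 0 := by positivity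
  simp only [mul_zero, zero_mul, mul_eq_zero, h3, false_or] at i1 i2 i3
  intro k
  fin_cases k <;> simp only [Fin.zero_eta, Fin.mk_one, Fin.reduceFinMk] <;>
    exact_mod_cast (by linarith : ((_ : ℤ) : ℝ) = 0)

/-- `(θ,0,0,0,0,0) = -μ₂ + 4μ₃ + 3μ₄ + 2μ₅ + μ₆ - 2μ₇ + 2μ₈ - 3μ₉ + 6μ₁₀`,
and the ℤ-submodule generated by `μ₁ = (1,0,…,0)` and `(θ,0,…,0)` is free of rank 2 and
a direct summand of the ℤ-submodule generated by `{μ₁, …, μ₁₀}`. -/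
theorem theta_vector_hexic_case (θ : ℝ) (hθ : Irrational θ) :
    (![(θ : ℂ), 0, 0, 0, 0, 0] : Fin 6 → ℂ)
      = -μ θ 1 + (4 : ℤ) • μ θ 2 + (3 : ℤ) • μ θ 3 + (2 : ℤ) • μ θ 4 + μ θ 5
        - (2 : ℤ) • μ θ 6 + (2 : ℤ) • μ θ 7 - (3 : ℤ) • μ θ 8 + (6 : ℤ) • μ θ 9 ∧
    Module.Free ℤ
      (Submodule.span ℤ ({μ θ 0, ![(θ : ℂ), 0, 0, 0, 0, 0]} : Set (Fin 6 → ℂ))) ∧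
    Module.finrank ℤ
      (Submodule.span ℤ ({μ θ 0, ![(θ : ℂ), 0, 0, 0, 0, 0]} : Set (Fin 6 → ℂ))) = 2 ∧
    Submodule.span ℤ ({μ θ 0, ![(θ : ℂ), 0, 0, 0, 0, 0]} : Set (Fin 6 → ℂ))
      ≤ Submodule.span ℤ (Set.range (μ θ)) ∧
    ∃ P : Submodule ℤ (Fin 6 → ℂ),
      P ≤ Submodule.span ℤ (Set.range (μ θ)) ∧
      Submodule.span ℤ ({μ θ 0, ![(θ : ℂ), 0, 0, 0, 0, 0]} : Set (Fin 6 → ℂ)) ⊓ P = ⊥ ∧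
      Submodule.span ℤ ({μ θ 0, ![(θ : ℂ), 0, 0, 0, 0, 0]} : Set (Fin 6 → ℂ)) ⊔ P
        = Submodule.span ℤ (Set.range (μ θ)) := by
  set v : Fin 6 → ℂ := ![(θ : ℂ), 0, 0, 0, 0, 0]
  set N := span ℤ ({μ θ 0, v} : Set (Fin 6 → ℂ))
  set P := span ℤ (Set.range (μ θ ∘ complementIndex))
  have hvN : v ∈ N := subset_span (Set.mem_insert_of_mem _ rfl)
  have hvP : v - μ θ 5 ∈ P := thetaVector_sub_μ_five_mem_span_complement θ
  have hPM : P ≤ span ℤ (Set.range (μ θ)) := span_mono (Set.range_comp_subset_range _ _)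
  have hNM : N ≤ span ℤ (Set.range (μ θ)) := by
    refine span_le.2 (Set.insert_subset (subset_span ⟨0, rfl⟩) (Set.singleton_subset_iff.2 ?_))
    simpa using add_mem (hPM hvP) (subset_span ⟨5, rfl⟩)
  have hN_ker : N ≤ LinearMap.ker (LinearMap.funLeft ℤ ℂ Fin.succ) := by
    refine span_le.2 (Set.insert_subset ?_ (Set.singleton_subset_iff.2 ?_)) <;>
      · ext i; fin_cases i <;> rfl
  have hμ : ∀ i, μ θ i ∈ N ⊔ P := by
    intro i
    obtain rfl | rfl | ⟨k, rfl⟩ := eq_zero_or_eq_five_or_exists_complementIndex i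
    · exact mem_sup_left (subset_span (Set.mem_insert _ _))
    · simpa using sub_mem (mem_sup_left hvN) (mem_sup_right hvP)
    · exact mem_sup_right (subset_span ⟨k, rfl⟩)
  obtain ⟨hfree, hrank⟩ := (linearIndependent_μ_zero_thetaVector hθ).free_span_pair_and_finrank
  refine ⟨thetaVector_eq θ, hfree, hrank, hNM, P, hPM, ?_, ?_⟩
  · exact disjoint_iff.1
      ((range_ker_disjoint (f := LinearMap.funLeft ℤ ℂ Fin.succ)
        (linearIndependent_tail_μ_complement θ)).mono_right hN_ker).symm
  · exact le_antisymm (sup_le hNM hPM) (span_le.2 (Set.range_subset_iff.2 hμ))
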